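/- arXiv:1603.00187 — 2 statements merged into one kernel-verified Lean document; each statement's English description precedes it below -/
import Mathlib

section
/- Let Y = X₁ × ⋯ × X_t be a direct product of finite groups and let J ≤ Y be a subgroup such that the projection of J onto each factor Xᵢ is surjective. Then the quotient N_Y(J)/J is solvable (indeed of derived length at most t − 1). -/
/-!
Let `N` be the normalizer of `J` and, for a set `T` of coordinates, let `J_T` be the subgroup of
elements agreeing on `T` with some element of `J`. Write `u ∈ N ∩ J_T` as `u = a j` with `j ∈ J` and
`a ∈ N` trivial on `T`. For `v ∈ N`, modulo `J` the commutator `⁅u, v⁆` is `⁅a, v⁆`, which agrees on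
`T ∪ {i}` with `⁅a, x⁆ ∈ J` for any `x ∈ J` with `x i = v i`; such an `x` exists because `J`
projects onto `X i`. Hence `⁅N ∩ J_T, N⁆ ≤ J_{T ∪ {i}}`, so the `t`-th term of the lower central
series of `N` lies in `J_univ = J`: the quotient `N / J` is even nilpotent, of class at most `t`.
-/

open scoped commutatorElement

namespace Subgroup

section

variable {G : Type*} [Group G]

lemma isNilpotent_quotient_of_lowerCentralSeries_le {H : Subgroup G} [H.Normal] {n : ℕ}
    (h : (⊤ : Subgroup G).lowerCentralSeries n ≤ H) : Group.IsNilpotent (G ⧸ H) :=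
  nilpotent_iff_lowerCentralSeries.2 ⟨n, by
    rw [← map_top_of_surjective _ (QuotientGroup.mk'_surjective H), ← map_lowerCentralSeries,
      map_eq_bot_iff, QuotientGroup.ker_mk']
    exact h⟩

variable {H : Subgroup G} {a b j : G}

lemma commutatorElement_mem_of_mem_normalizer (ha : a ∈ normalizer (H : Set G)) (hj : j ∈ H) :
    ⁅a, j⁆ ∈ H := by
  rw [commutatorElement_def]
  exact mul_mem ((mem_normalizer_iff.1 ha j).1 hj) (inv_mem hj)

lemma commutatorElement_mul_left_mul_inv_mem (ha : a ∈ normalizer (H : Set G))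
    (hb : b ∈ normalizer (H : Set G)) (hj : j ∈ H) : ⁅a * j, b⁆ * ⁅a, b⁆⁻¹ ∈ H := by
  rw [commutatorElement_mul_left_eq_conj_mul, mul_inv_cancel_right]
  refine (mem_normalizer_iff.1 ha _).1 ?_
  rw [← commutatorElement_inv]
  exact inv_mem (commutatorElement_mem_of_mem_normalizer hb hj)

end

section

variable {ι : Type*} {X : ι → Type*} [∀ i, Group (X i)]

def agreeOn (J : Subgroup (∀ i, X i)) (T : Set ι) : Subgroup (∀ i, X i) where
  carrier := {y | ∃ j ∈ J, ∀ i ∈ T, y i = j i}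
  mul_mem' := by
    rintro y z ⟨j, hj, hyj⟩ ⟨k, hk, hzk⟩
    exact ⟨j * k, mul_mem hj hk, fun i hi => by simp only [Pi.mul_apply, hyj i hi, hzk i hi]⟩
  one_mem' := ⟨1, one_mem J, fun _ _ => rfl⟩
  inv_mem' := by
    rintro y ⟨j, hj, hyj⟩
    exact ⟨j⁻¹, inv_mem hj, fun i hi => by simp only [Pi.inv_apply, hyj i hi]⟩

variable {J : Subgroup (∀ i, X i)}

lemma agreeOn_empty : J.agreeOn ∅ = ⊤ :=
  eq_top_iff.2 fun _ _ => ⟨1, one_mem J, fun _ h => h.elim⟩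

lemma agreeOn_univ : J.agreeOn Set.univ = J := by
  ext y
  exact ⟨fun ⟨j, hj, hyj⟩ => funext (fun i => hyj i trivial) ▸ hj,
    fun hy => ⟨y, hy, fun _ _ => rfl⟩⟩

lemma commutatorElement_mem_agreeOn_insert {T : Set ι} {i : ι}
    (hsurj : J.map (Pi.evalMonoidHom X i) = ⊤) {u v : ∀ i, X i}
    (hu : u ∈ normalizer (J : Set (∀ i, X i))) (hv : v ∈ normalizer (J : Set (∀ i, X i)))
    (huT : u ∈ J.agreeOn T) : ⁅u, v⁆ ∈ J.agreeOn (insert i T) := by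
  obtain ⟨j, hj, huj⟩ := huT
  set a := u * j⁻¹
  have ha : a ∈ normalizer (J : Set (∀ i, X i)) := mul_mem hu (inv_mem (le_normalizer hj))
  have hm : ⁅u, v⁆ * ⁅a, v⁆⁻¹ ∈ J := by
    simpa only [a, inv_mul_cancel_right] using commutatorElement_mul_left_mul_inv_mem ha hv hj
  obtain ⟨x, hx, hxv⟩ : ∃ x ∈ J, x i = v i := by
    obtain ⟨x, hx, hxv⟩ := hsurj ▸ mem_top (v i)
    exact ⟨x, hx, hxv⟩
  have hagree : ∀ l ∈ insert i T, ⁅a, v⁆ l = ⁅a, x⁆ l := by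
    rintro l (rfl | hl)
    · simp only [commutatorElement_def, Pi.mul_apply, Pi.inv_apply, hxv]
    · have hal : a l = 1 := by simp only [a, Pi.mul_apply, Pi.inv_apply, huj l hl, mul_inv_cancel]
      simp only [commutatorElement_def, Pi.mul_apply, Pi.inv_apply, hal, one_mul, inv_one, mul_one,
        mul_inv_cancel]
  refine ⟨⁅u, v⁆ * ⁅a, v⁆⁻¹ * ⁅a, x⁆,
    mul_mem hm (commutatorElement_mem_of_mem_normalizer ha hx), fun l hl => ?_⟩
  rw [Pi.mul_apply, ← hagree l hl, Pi.mul_apply, Pi.inv_apply, inv_mul_cancel_right]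

lemma lowerCentralSeries_normalizer_le_agreeOn (T : Finset ι)
    (hsurj : ∀ i ∈ T, J.map (Pi.evalMonoidHom X i) = ⊤) :
    (⊤ : Subgroup (normalizer (J : Set (∀ i, X i)))).lowerCentralSeries T.card ≤
      (J.agreeOn T).subgroupOf (normalizer (J : Set (∀ i, X i))) := by
  classical
  induction T using Finset.induction_on with
  | empty => simp [agreeOn_empty]
  | insert i T hiT ih =>
    rw [Finset.card_insert_of_notMem hiT, lowerCentralSeries_succ, commutator_le]
    intro u hu v _
    rw [mem_subgroupOf, Finset.coe_insert]
    exact commutatorElement_mem_agreeOn_insert (hsurj i (Finset.mem_insert_self i T)) u.2 v.2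
      (ih (fun l hl => hsurj l (Finset.mem_insert_of_mem hl)) hu)

theorem isNilpotent_normalizer_quotient_of_forall_map_eval_eq_top [Fintype ι]
    (hsurj : ∀ i, J.map (Pi.evalMonoidHom X i) = ⊤) :
    Group.IsNilpotent (normalizer (J : Set (∀ i, X i)) ⧸
      J.subgroupOf (normalizer (J : Set (∀ i, X i)))) :=
  isNilpotent_quotient_of_lowerCentralSeries_le (n := Fintype.card ι) <| by
    simpa only [Finset.card_univ, Finset.coe_univ, agreeOn_univ] using
      lowerCentralSeries_normalizer_le_agreeOn Finset.univ fun i _ => hsurj i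

end

end Subgroup

theorem normalizer_quotient_isSolvable_general
    {t : ℕ} (X : Fin t → Type*) [∀ i, Group (X i)]
    (J : Subgroup (∀ i, X i))
    (hsurj : ∀ i, J.map (Pi.evalMonoidHom X i) = ⊤) :
    Group.IsSolvable (↥(Subgroup.normalizer (J : Set (∀ i, X i))) ⧸
      J.subgroupOf (Subgroup.normalizer (J : Set (∀ i, X i)))) :=
  have := Subgroup.isNilpotent_normalizer_quotient_of_forall_map_eval_eq_top hsurj
  inferInstance

/-- If `J` is a subgroup of a finite direct product
`Y = X₁ × ⋯ × X_t` projecting onto every factor, then `N_Y(J)/J` is solvable. -/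
theorem normalizer_quotient_isSolvable
    {t : ℕ} (X : Fin t → Type*) [∀ i, Group (X i)] [∀ i, Finite (X i)]
    (J : Subgroup (∀ i, X i))
    (hsurj : ∀ i, J.map (Pi.evalMonoidHom X i) = ⊤) :
    Group.IsSolvable (↥(Subgroup.normalizer (J : Set (∀ i, X i))) ⧸
      J.subgroupOf (Subgroup.normalizer (J : Set (∀ i, X i)))) :=
  normalizer_quotient_isSolvable_general X J hsurj
end

section
/- Let G be a finite group, let G = G₀ ⊵ G₁ ⊵ ⋯ ⊵ G_r = 1 be a normal series with each Gᵢ normal in G, and let p be a prime. Suppose for each i that Iᵢ is an intravariant p′-subgroup of Gᵢ₋₁/Gᵢ. Then G has a p′-subgroup H with |H| ≥ ∏ᵢ |Iᵢ|. -/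
def IsIntravariant {X : Type*} [Group X] (I : Subgroup X) : Prop :=
  ∀ α : MulAut X, ∃ x : X, I.map α.toMonoidHom = I.map (MulAut.conj x).toMonoidHom

/-!
Induct on the length of the series, passing from `G` to `G / G₁`. The inductive step: let
`N ⊴ G`, let `I` be an intravariant `p'`-subgroup of `N` and `Q` a `p'`-subgroup of `G / N`.
Conjugation by `g ∈ G` is an automorphism of `N`, so it moves `I` to an `N`-conjugate of `I`;
hence `G = N_G(I) N` (Frattini argument), and `C = N_G(I) ∩ π⁻¹(Q)` maps onto `Q` with `I ⊴ C`.
In `C / I`, a Sylow `p`-subgroup `P` lies in the kernel of the map onto the `p'`-group `Q`, so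
`N(P)` still maps onto `Q`, and so does a Schur–Zassenhaus complement of `P` in `N(P)`. Its
preimage in `C` is a `p'`-subgroup of order at least `|I| |Q|`.
-/

open Subgroup
open scoped Pointwise

namespace Sylow

variable {X : Type*} [Group X] [Finite X] {p : ℕ} [Fact p.Prime]

theorem exists_pPrime_sup_eq_normalizer (P : Sylow p X) :
    ∃ H : Subgroup X, ¬ p ∣ Nat.card H ∧ (P : Subgroup X) ⊔ H = normalizer (P : Set X) := by
  set N := normalizer (P : Set X)
  let P' : Sylow p N := P.subtype le_normalizer
  have : (P' : Subgroup N).Normal := by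
    rw [Sylow.coe_subtype]; exact normal_in_normalizer
  obtain ⟨H, hH⟩ := exists_right_complement'_of_coprime P'.card_coprime_index
  refine ⟨H.map N.subtype, ?_, ?_⟩
  · have hcard : Nat.card H = (P' : Subgroup N).index :=
      Nat.eq_of_mul_eq_mul_left Nat.card_pos (hH.card_mul_card.trans (card_mul_index _).symm)
    rw [card_map_of_injective N.subtype_injective, hcard]
    exact P'.not_dvd_index
  · have hsup := congrArg (map N.subtype) hH.sup_eq_top
    have : (P : Subgroup X) ≤ N := le_normalizer
    rwa [Subgroup.map_sup, Sylow.coe_subtype, subgroupOf_map_subtype, inf_of_le_left this,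
      ← MonoidHom.range_eq_map, range_subtype] at hsup

end Sylow

section

variable {X Y : Type*} [Group X] [Finite X] [Group Y] {p : ℕ} [Fact p.Prime]

theorem exists_pPrime_subgroup_card_le_of_surjective {f : X →* Y} (hf : Function.Surjective f)
    (hY : ¬ p ∣ Nat.card Y) : ∃ H : Subgroup X, ¬ p ∣ Nat.card H ∧ Nat.card Y ≤ Nat.card H := by
  have : Finite Y := Finite.of_surjective f hf
  let P : Sylow p X := default
  -- the image of `P` is a Sylow `p`-subgroup of the `p'`-group `Y`, hence trivial
  have hPf : (P : Subgroup X) ≤ f.ker := by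
    have hcard := (P.mapSurjective hf).card_eq_multiplicity
    rw [Nat.factorization_eq_zero_of_not_dvd hY, pow_zero, Sylow.coe_mapSurjective] at hcard
    rw [← Subgroup.map_eq_bot_iff]
    exact eq_bot_of_card_eq _ hcard
  obtain ⟨H, hHp, hPH⟩ := P.exists_pPrime_sup_eq_normalizer
  have hHf : H.map f = ⊤ := by
    have hNf : (normalizer (P : Set X) ⊔ f.ker).map f = ⊤ := by
      rw [Sylow.normalizer_sup_eq_top' P hPf]; exact map_top_of_surjective f hf
    rwa [Subgroup.map_sup, ← hPH, Subgroup.map_sup, (Subgroup.map_eq_bot_iff _).mpr hPf,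
      (Subgroup.map_eq_bot_iff _).mpr le_rfl, bot_sup_eq, sup_bot_eq] at hNf
  refine ⟨H, hHp, ?_⟩
  rw [← card_top (G := Y), ← hHf]
  exact Nat.card_le_card_of_surjective _ (f.subgroupMap_surjective H)

theorem exists_pPrime_subgroup_card_mul_le_of_surjective {J : Subgroup X} [J.Normal]
    (hJ : ¬ p ∣ Nat.card J) {f : X →* Y} (hf : Function.Surjective f) (hJf : J ≤ f.ker)
    (hY : ¬ p ∣ Nat.card Y) :
    ∃ S : Subgroup X, ¬ p ∣ Nat.card S ∧ Nat.card J * Nat.card Y ≤ Nat.card S := by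
  obtain ⟨H, hHp, hHY⟩ := exists_pPrime_subgroup_card_le_of_surjective
    (f := QuotientGroup.lift J f hJf) (QuotientGroup.lift_surjective_of_surjective _ _ hf _) hY
  have hcard : Nat.card (H.comap (QuotientGroup.mk' J)) = Nat.card J * Nat.card H :=
    QuotientGroup.card_preimage_mk J H
  refine ⟨H.comap (QuotientGroup.mk' J), ?_, ?_⟩
  · rw [hcard]; exact Nat.Prime.not_dvd_mul Fact.out hJ hHp
  · rw [hcard]; exact Nat.mul_le_mul_left _ hHY

end

theorem Subgroup.mem_normalizer_map_subtype_of_smul_eq {G : Type*} [Group G] {N : Subgroup G}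
    [N.Normal] {I : Subgroup N} {g : G}
    (hg : (MulAut.conjNormal g : MulAut N) • I = I) : g ∈ normalizer (I.map N.subtype : Set G) := by
  have hcomm : (MulAut.conj g).toMonoidHom.comp N.subtype
      = N.subtype.comp (MulAut.conjNormal g : MulAut N).toMonoidHom := rfl
  intro x
  rw [SetLike.mem_coe, SetLike.mem_coe,
    ← mem_map_iff_mem (f := (MulAut.conj g).toMonoidHom) (MulAut.conj g).injective, map_map,
    hcomm, ← map_map]
  exact Iff.of_eq (congrArg (fun K : Subgroup N => _ ∈ K.map N.subtype) hg)

theorem IsIntravariant.normalizer_sup_eq_top {G : Type*} [Group G] {N : Subgroup G} [N.Normal]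
    {I : Subgroup N} (hI : IsIntravariant I) : normalizer (I.map N.subtype : Set G) ⊔ N = ⊤ := by
  refine top_le_iff.mp fun g _ => ?_
  obtain ⟨x, hx⟩ : ∃ x : N, (MulAut.conjNormal g : MulAut N) • I = MulAut.conj x • I :=
    hI (MulAut.conjNormal g)
  have hfix : (MulAut.conjNormal ((x : G)⁻¹ * g) : MulAut N) • I = I := by
    rw [map_mul, mul_smul, hx, map_inv, MulAut.conjNormal_val, inv_smul_smul]
  rw [← mul_inv_cancel_left (x : G) g, sup_comm]
  exact mul_mem_sup x.2 (mem_normalizer_map_subtype_of_smul_eq hfix)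

theorem IsIntravariant.exists_pPrime_subgroup_card_mul_le {G : Type*} [Group G] [Finite G]
    {p : ℕ} [Fact p.Prime] {N : Subgroup G} [N.Normal] {I : Subgroup N} (hI : IsIntravariant I)
    (hIp : ¬ p ∣ Nat.card I) {Q : Subgroup (G ⧸ N)} (hQp : ¬ p ∣ Nat.card Q) :
    ∃ S : Subgroup G, ¬ p ∣ Nat.card S ∧ Nat.card I * Nat.card Q ≤ Nat.card S := by
  set J : Subgroup G := I.map N.subtype
  set C : Subgroup G := normalizer (J : Set G) ⊓ Q.comap (QuotientGroup.mk' N)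
  have hJN : J ≤ N := map_subtype_le I
  have hJC : J ≤ C := le_inf le_normalizer fun x hx => by
    simp [(QuotientGroup.eq_one_iff x).mpr (hJN hx)]
  have : (J.subgroupOf C).Normal :=
    (normal_subgroupOf_iff_le_normalizer hJC).mpr inf_le_left
  let f : C →* Q := ((QuotientGroup.mk' N).comp C.subtype).codRestrict Q fun c => c.2.2
  have hf : Function.Surjective f := by
    have hmap : (normalizer (J : Set G)).map (QuotientGroup.mk' N) = ⊤ := by
      have := congrArg (map (QuotientGroup.mk' N)) hI.normalizer_sup_eq_top
      rwa [Subgroup.map_sup, (Subgroup.map_eq_bot_iff _).mpr (QuotientGroup.ker_mk' N).ge,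
        sup_bot_eq, map_top_of_surjective _ (QuotientGroup.mk'_surjective N)] at this
    rintro ⟨q, hq⟩
    obtain ⟨g, hg, rfl⟩ := (hmap ▸ mem_top q : q ∈ _)
    exact ⟨⟨g, hg, hq⟩, rfl⟩
  have hJf : J.subgroupOf C ≤ f.ker := fun x hx =>
    Subtype.ext ((QuotientGroup.eq_one_iff (x : G)).mpr (hJN hx))
  have hJcard : Nat.card (J.subgroupOf C) = Nat.card I :=
    (Nat.card_congr (subgroupOfEquivOfLe hJC).toEquiv).trans
      (card_map_of_injective N.subtype_injective)
  obtain ⟨S, hSp, hSc⟩ := exists_pPrime_subgroup_card_mul_le_of_surjective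
    (hJcard ▸ hIp) hf hJf hQp
  refine ⟨S.map C.subtype, ?_, ?_⟩ <;> rw [card_map_of_injective C.subtype_injective]
  · exact hSp
  · exact hJcard ▸ hSc

noncomputable def QuotientGroup.subgroupOfEquivOfMap {G G' : Type*} [Group G] [Group G']
    {φ : G →* G'} {A B : Subgroup G} {A' B' : Subgroup G'} (hB : φ.ker ≤ B) (hA' : A.map φ = A')
    (hB' : B.map φ = B') [(B.subgroupOf A).Normal] [(B'.subgroupOf A').Normal] :
    A ⧸ B.subgroupOf A ≃* A' ⧸ B'.subgroupOf A' := by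
  subst hA' hB'
  refine (QuotientGroup.quotientMulEquivOfEq ?_).trans
    (QuotientGroup.quotientKerEquivOfSurjective ((QuotientGroup.mk' _).comp (φ.subgroupMap A))
      ((QuotientGroup.mk'_surjective _).comp (φ.subgroupMap_surjective A)))
  ext x
  rw [MonoidHom.mem_ker, MonoidHom.comp_apply, QuotientGroup.mk'_apply, QuotientGroup.eq_one_iff,
    mem_subgroupOf, mem_subgroupOf, MonoidHom.subgroupMap_apply_coe, ← mem_comap,
    comap_map_eq_self hB]

theorem IsIntravariant.map_mulEquiv {X Y : Type*} [Group X] [Group Y] {I : Subgroup X}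
    (hI : IsIntravariant I) (e : X ≃* Y) : IsIntravariant (I.map e.toMonoidHom) := by
  intro α
  obtain ⟨x, hx⟩ := hI ((e.trans α).trans e.symm)
  refine ⟨e x, ?_⟩
  have hα : α.toMonoidHom.comp e.toMonoidHom
      = e.toMonoidHom.comp ((e.trans α).trans e.symm).toMonoidHom := by
    ext; simp
  have hconj : (MulAut.conj (e x)).toMonoidHom.comp e.toMonoidHom
      = e.toMonoidHom.comp (MulAut.conj x).toMonoidHom := by
    ext; simp
  rw [map_map, hα, ← map_map, hx, map_map, ← hconj, ← map_map]

def HasIntravariantPPrimeSubgroup (p : ℕ) (X : Type*) [Group X] (n : ℕ) : Prop :=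
  ∃ I : Subgroup X, IsIntravariant I ∧ ¬ p ∣ Nat.card I ∧ Nat.card I = n

theorem HasIntravariantPPrimeSubgroup.of_mulEquiv {X Y : Type*} [Group X] [Group Y] {p n : ℕ}
    (h : HasIntravariantPPrimeSubgroup p X n) (e : X ≃* Y) :
    HasIntravariantPPrimeSubgroup p Y n := by
  obtain ⟨I, hI, hIp, rfl⟩ := h
  refine ⟨I.map e.toMonoidHom, hI.map_mulEquiv e, ?_, ?_⟩ <;>
    rw [card_map_of_injective e.injective]
  exact hIp

theorem exists_pPrime_subgroup_of_normalSeries {p : ℕ} [Fact p.Prime] (r : ℕ) {G : Type*}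
    [Group G] [Finite G] (s : Fin (r + 1) → Subgroup G) [∀ i, (s i).Normal] (h0 : s 0 = ⊥)
    (htop : s (Fin.last r) = ⊤) (hmono : Monotone s) (n : Fin r → ℕ)
    (hn : ∀ i, HasIntravariantPPrimeSubgroup p (s i.succ ⧸ (s i.castSucc).subgroupOf (s i.succ))
      (n i)) :
    ∃ H : Subgroup G, ¬ p ∣ Nat.card H ∧ ∏ i, n i ≤ Nat.card H := by
  induction r generalizing G with
  | zero => exact ⟨⊥, by simpa using (Fact.out : p.Prime).ne_one, by simp⟩
  | succ r ih =>
    set N := s (0 : Fin (r + 1)).succ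
    have hbot : (s (0 : Fin (r + 1)).castSucc).subgroupOf N = ⊥ := by
      rw [Fin.castSucc_zero, h0, bot_subgroupOf]
    obtain ⟨I₀, hI₀, hI₀p, hI₀n⟩ := (hn 0).of_mulEquiv
      ((QuotientGroup.quotientMulEquivOfEq hbot).trans QuotientGroup.quotientBot)
    let t : Fin (r + 1) → Subgroup (G ⧸ N) := fun j => (s j.succ).map (QuotientGroup.mk' N)
    have : ∀ j, (t j).Normal := fun j => Normal.map inferInstance _ (QuotientGroup.mk'_surjective N)
    have ht0 : t 0 = ⊥ := by
      rw [Subgroup.map_eq_bot_iff, QuotientGroup.ker_mk']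
    have httop : t (Fin.last r) = ⊤ := by
      simp only [t, Fin.succ_last, htop]
      exact map_top_of_surjective _ (QuotientGroup.mk'_surjective N)
    have htmono : Monotone t := fun a b hab => map_mono (hmono (Fin.succ_le_succ_iff.mpr hab))
    have hNle (j : Fin r) : (QuotientGroup.mk' N).ker ≤ s j.succ.castSucc := by
      rw [QuotientGroup.ker_mk']
      exact hmono (Fin.le_def.mpr (by simp))
    obtain ⟨Q, hQp, hQ⟩ := ih t ht0 httop htmono (fun j => n j.succ) fun j =>
      (hn j.succ).of_mulEquiv
        (QuotientGroup.subgroupOfEquivOfMap (hNle j) rfl (by rw [← Fin.succ_castSucc]))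
    obtain ⟨S, hSp, hS⟩ := hI₀.exists_pPrime_subgroup_card_mul_le hI₀p hQp
    refine ⟨S, hSp, ?_⟩
    calc ∏ i, n i = n 0 * ∏ j : Fin r, n j.succ := Fin.prod_univ_succ n
      _ ≤ Nat.card I₀ * Nat.card Q := by rw [hI₀n]; exact Nat.mul_le_mul_left _ hQ
      _ ≤ Nat.card S := hS

/-- Let `G` be a finite group with a normal series
`G = G₀ ⊵ G₁ ⊵ ⋯ ⊵ G_r = 1` (each term normal in `G`), `p` a prime, and for
each `i` let `Iᵢ` be an intravariant `p'`-subgroup of the factor `Gᵢ₋₁/Gᵢ`.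
Then `G` has a `p'`-subgroup `H` with `∏ᵢ |Iᵢ| ≤ |H|`. -/
theorem exists_pPrime_subgroup_of_intravariant
    {G : Type*} [Group G] [Finite G] (p : ℕ) (hp : p.Prime) (r : ℕ)
    (s : Fin (r + 1) → Subgroup G)
    (h0 : s 0 = ⊥) (htop : s (Fin.last r) = ⊤)
    (hle : ∀ i : Fin r, s i.castSucc ≤ s i.succ)
    (hnorm : ∀ i : Fin (r + 1), (s i).Normal)
    (I : ∀ i : Fin r,
      haveI : ((s i.castSucc).subgroupOf (s i.succ)).Normal :=
        (hnorm i.castSucc).subgroupOf _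
      Subgroup (↥(s i.succ) ⧸ (s i.castSucc).subgroupOf (s i.succ)))
    (hIp : ∀ i : Fin r, ¬ p ∣ Nat.card (I i))
    (hIintra : ∀ i : Fin r,
      haveI : ((s i.castSucc).subgroupOf (s i.succ)).Normal :=
        (hnorm i.castSucc).subgroupOf _
      IsIntravariant (I i)) :
    ∃ Hs : Subgroup G, ¬ p ∣ Nat.card Hs ∧
      ∏ i : Fin r, Nat.card (I i) ≤ Nat.card Hs := by
  have : Fact p.Prime := ⟨hp⟩
  exact exists_pPrime_subgroup_of_normalSeries r s h0 htop (Fin.monotone_iff_le_succ.mpr hle)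
    (fun i => Nat.card (I i)) fun i => ⟨I i, hIintra i, hIp i, rfl⟩
end
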